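/- arXiv:math/0107131 — 4 statements merged into one kernel-verified Lean document; each statement's English description precedes it below -/
import Mathlib

section
/- Let R = {(f_N, f_S) ∈ ℂ[x] × ℂ[x] : x divides f_N - f_S}. Then R is generated as a ℂ[x]-algebra (via the diagonal embedding ℂ[x] → ℂ[x] × ℂ[x]) by the single element (x, 0). -/
open Polynomial

noncomputable def Saux : Subalgebra (Polynomial ℂ) (Polynomial ℂ × Polynomial ℂ) where
  carrier := {p : Polynomial ℂ × Polynomial ℂ | X ∣ p.1 - p.2}
  mul_mem' := by
    rintro ⟨a1, a2⟩ ⟨b1, b2⟩ ha hb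
    have h : a1 * b1 - a2 * b2 = (a1 - a2) * b1 + a2 * (b1 - b2) := by ring
    show X ∣ a1 * b1 - a2 * b2
    rw [h]
    exact dvd_add (ha.mul_right _) (Dvd.dvd.mul_left hb _)
  add_mem' := by
    rintro ⟨a1, a2⟩ ⟨b1, b2⟩ ha hb
    have h : a1 + b1 - (a2 + b2) = (a1 - a2) + (b1 - b2) := by ring
    show X ∣ a1 + b1 - (a2 + b2)
    rw [h]
    exact dvd_add ha hb
  algebraMap_mem' := by
    intro r
    show X ∣ r - r
    simp

/-- `R = {(f_N, f_S) : x ∣ f_N - f_S}` is generated as a `ℂ[x]`-algebra (via the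
diagonal embedding `ℂ[x] → ℂ[x] × ℂ[x]`, which is the `algebraMap` of the product
algebra) by the single element `(x, 0)`. -/
theorem stmt_1 :
    (Algebra.adjoin (Polynomial ℂ) {((X : Polynomial ℂ), (0 : Polynomial ℂ))} :
        Subalgebra (Polynomial ℂ) (Polynomial ℂ × Polynomial ℂ)).carrier =
      {p : Polynomial ℂ × Polynomial ℂ | X ∣ p.1 - p.2} := by
  ext p
  constructor
  · intro hp
    have hle : Algebra.adjoin (Polynomial ℂ)
        {((X : Polynomial ℂ), (0 : Polynomial ℂ))} ≤ Saux := by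
      apply Algebra.adjoin_le
      rintro q hq
      rw [Set.mem_singleton_iff] at hq
      subst hq
      show X ∣ (X : Polynomial ℂ) - 0
      rw [sub_zero]
    exact hle hp
  · rintro hp
    obtain ⟨c, hc⟩ := hp
    have hx : ((X : Polynomial ℂ), (0 : Polynomial ℂ)) ∈
        Algebra.adjoin (Polynomial ℂ) {((X : Polynomial ℂ), (0 : Polynomial ℂ))} :=
      Algebra.subset_adjoin rfl
    have hp2 : p = algebraMap (Polynomial ℂ) (Polynomial ℂ × Polynomial ℂ) p.2
        + c • ((X : Polynomial ℂ), (0 : Polynomial ℂ)) := by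
      have ha : algebraMap (Polynomial ℂ) (Polynomial ℂ × Polynomial ℂ) p.2 = (p.2, p.2) := rfl
      rw [ha, Prod.smul_mk, Prod.mk_add_mk, smul_eq_mul, smul_zero, add_zero]
      refine Prod.ext ?_ rfl
      show p.1 = p.2 + c * X
      linear_combination hc
    show p ∈ Algebra.adjoin (Polynomial ℂ) {((X : Polynomial ℂ), (0 : Polynomial ℂ))}
    rw [hp2]
    exact add_mem (Subalgebra.algebraMap_mem _ _) (Subalgebra.smul_mem _ hx c)
end

section
/- Let R = {(f₁, f₂, f₃) ∈ ℂ[x]³ : x | fᵢ - fⱼ for all i,j, and x² | f₁ - 2f₂ + f₃}. Then R is a free ℂ[x]-module of rank 3. -/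
open Polynomial

/-! The vectors `(1,1,1)`, `(0,x,2x)`, `(0,0,2x²)` form a basis. Every `f` in the module is
`f 0 • (1,1,1) + g • (0,x,2x) + (h/2) • (0,0,2x²)`, where `x g = f 1 - f 0` and
`x² h = f 0 - 2 f 1 + f 2`; independence holds because the three vectors are triangular with
diagonal `1, x, 2x²`. -/

section

variable {R : Type*} [CommRing R]

def cp2FixedPointImage (x : R) : Submodule R (Fin 3 → R) where
  carrier := {f | (∀ i j, x ∣ f i - f j) ∧ x ^ 2 ∣ f 0 - 2 * f 1 + f 2}
  zero_mem' := by simp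
  add_mem' := fun {f g} hf hg => by
    refine ⟨fun i j => ?_, ?_⟩
    · simpa [add_sub_add_comm] using dvd_add (hf.1 i j) (hg.1 i j)
    · convert dvd_add hf.2 hg.2 using 1
      simp only [Pi.add_apply]; ring
  smul_mem' := fun c f hf => by
    refine ⟨fun i j => ?_, ?_⟩
    · simpa [mul_sub] using (hf.1 i j).mul_left c
    · convert hf.2.mul_left c using 1
      simp only [Pi.smul_apply, smul_eq_mul]; ring

def cp2Generator (x : R) : Fin 3 → Fin 3 → R :=
  ![1, ![0, x, 2 * x], ![0, 0, 2 * x ^ 2]]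

theorem cp2Generator_mem (x : R) (i : Fin 3) : cp2Generator x i ∈ cp2FixedPointImage x := by
  refine ⟨fun j k => ?_, ?_⟩
  · fin_cases i <;> fin_cases j <;> fin_cases k <;>
      simp [cp2Generator, dvd_mul_of_dvd_right, pow_two]
  · fin_cases i <;> simp [cp2Generator, show (1 : R) - 2 + 1 = 0 by ring]

theorem linearIndependent_cp2Generator {x : R} (hx : x ∈ nonZeroDivisors R)
    (h2 : IsUnit (2 : R)) : LinearIndependent R (cp2Generator x) := by
  rw [Fintype.linearIndependent_iff]
  intro c hc
  have hc0 : c 0 = 0 := by simpa [cp2Generator, Fin.sum_univ_three] using congrFun hc 0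
  have hc1 : c 1 = 0 := by
    have hcoord := congrFun hc 1
    simp [cp2Generator, Fin.sum_univ_three, hc0] at hcoord
    exact (mul_right_mem_nonZeroDivisors_eq_zero_iff hx).mp hcoord
  have hc2 : c 2 = 0 := by
    have hcoord := congrFun hc 2
    simp [cp2Generator, Fin.sum_univ_three, hc0, hc1] at hcoord
    exact (mul_right_mem_nonZeroDivisors_eq_zero_iff
      (mul_mem h2.mem_nonZeroDivisors (pow_mem hx 2))).mp hcoord
  intro i
  fin_cases i <;> assumption

theorem span_cp2Generator {x : R} (h2 : IsUnit (2 : R)) :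
    Submodule.span R (Set.range (cp2Generator x)) = cp2FixedPointImage x := by
  refine le_antisymm (Submodule.span_le.mpr ?_) fun f hf => ?_
  · rintro _ ⟨i, rfl⟩
    exact cp2Generator_mem x i
  obtain ⟨g, hg⟩ := hf.1 1 0
  obtain ⟨h, hh⟩ := hf.2
  obtain ⟨half, hhalf⟩ := h2.exists_right_inv
  rw [Submodule.mem_span_range_iff_exists_fun]
  refine ⟨![f 0, g, half * h], funext fun k => ?_⟩
  fin_cases k <;> simp [cp2Generator, Fin.sum_univ_three]
  · linear_combination -hg
  · linear_combination -2 * hg - hh + x ^ 2 * h * hhalf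

noncomputable def cp2Basis {x : R} (hx : x ∈ nonZeroDivisors R) (h2 : IsUnit (2 : R)) :
    Module.Basis (Fin 3) R (cp2FixedPointImage x) :=
  (Module.Basis.span (linearIndependent_cp2Generator hx h2)).map
    (LinearEquiv.ofEq _ _ (span_cp2Generator h2))

end

/-- `R = {(f₁,f₂,f₃) ∈ ℂ[x]³ : x ∣ fᵢ - fⱼ for all i,j, and x² ∣ f₁ - 2f₂ + f₃}`
is a free module of rank 3 over `ℂ[x]` (acting diagonally on `ℂ[x]³`). -/
theorem stmt_6 :
    ∃ N : Submodule (Polynomial ℂ) (Fin 3 → Polynomial ℂ),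
      (N : Set (Fin 3 → Polynomial ℂ)) =
        {f : Fin 3 → Polynomial ℂ |
          (∀ i j : Fin 3, X ∣ f i - f j) ∧
          X ^ 2 ∣ f 0 - 2 * f 1 + f 2} ∧
      Nonempty (Module.Basis (Fin 3) (Polynomial ℂ) N) := by
  have hX : (X : ℂ[X]) ∈ nonZeroDivisors ℂ[X] := mem_nonZeroDivisors_of_ne_zero X_ne_zero
  have h2 : IsUnit (2 : ℂ[X]) := by
    rw [← map_ofNat C 2]
    exact isUnit_C.mpr (Ne.isUnit two_ne_zero)
  exact ⟨cp2FixedPointImage X, rfl, ⟨cp2Basis hX h2⟩⟩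
end

section
/- Let R = {(f₁, f₂, f₃, f₄) ∈ ℂ[x]⁴ : x | fᵢ - fⱼ for all i, j, and x² | f₁ - f₂ - f₃ + f₄}. Then R is a subring of ℂ[x]⁴ and a free ℂ[x]-module of rank 4. -/
/-!
The conditions defining `R` are preserved by products thanks to the identities
`fᵢgᵢ - fⱼgⱼ = fᵢ(gᵢ - gⱼ) + (fᵢ - fⱼ)gⱼ` and
`f₀g₀ - f₁g₁ - f₂g₂ + f₃g₃ = f₀(g₀ - g₁ - g₂ + g₃) + (f₀ - f₁)(g₁ - g₃)
  + (f₀ - f₂)(g₂ - g₃) + (f₀ - f₁ - f₂ + f₃)g₃`,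
whose middle terms are products of two multiples of `x`. As a module, `R` is the image of
`(a, b, c, d) ↦ (a, a + xb, a + xc, a + xb + xc + x²d)`, which is injective since `x` is not a
zero divisor; so `(1,1,1,1), (0,x,0,x), (0,0,x,x), (0,0,0,x²)` is a basis.
-/

open Polynomial

variable {A : Type*} [CommRing A]

theorem forall_dvd_sub_iff {ι : Type*} {t : A} {f : ι → A} (i₀ : ι) :
    (∀ i j, t ∣ f i - f j) ↔ ∀ i, t ∣ f i - f i₀ :=
  ⟨fun h i => h i i₀, fun h i j =>
    sub_sub_sub_cancel_right (f i) (f j) (f i₀) ▸ dvd_sub (h i) (h j)⟩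

/-- For `A = ℂ[x]` and `t = x` this is the GKM presentation of `H_{S¹}(𝒪_λ // H)`. -/
def gkmSet (t : A) : Set (Fin 4 → A) :=
  {f | (∀ i j, t ∣ f i - f j) ∧ t ^ 2 ∣ f 0 - f 1 - f 2 + f 3}

theorem gkmSet_add_mem {t : A} {f g : Fin 4 → A} (hf : f ∈ gkmSet t) (hg : g ∈ gkmSet t) :
    f + g ∈ gkmSet t := by
  refine ⟨fun i j => ?_, ?_⟩
  · have h : (f + g) i - (f + g) j = (f i - f j) + (g i - g j) := by
      simp only [Pi.add_apply]; ring
    exact h ▸ dvd_add (hf.1 i j) (hg.1 i j)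
  · have h : (f + g) 0 - (f + g) 1 - (f + g) 2 + (f + g) 3
        = (f 0 - f 1 - f 2 + f 3) + (g 0 - g 1 - g 2 + g 3) := by
      simp only [Pi.add_apply]; ring
    exact h ▸ dvd_add hf.2 hg.2

theorem gkmSet_mul_mem {t : A} {f g : Fin 4 → A} (hf : f ∈ gkmSet t) (hg : g ∈ gkmSet t) :
    f * g ∈ gkmSet t := by
  refine ⟨fun i j => ?_, ?_⟩
  · have h : (f * g) i - (f * g) j = f i * (g i - g j) + (f i - f j) * g j := by
      simp only [Pi.mul_apply]; ring
    exact h ▸ dvd_add ((hg.1 i j).mul_left _) ((hf.1 i j).mul_right _)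
  · have h : (f * g) 0 - (f * g) 1 - (f * g) 2 + (f * g) 3
        = f 0 * (g 0 - g 1 - g 2 + g 3) + (f 0 - f 1) * (g 1 - g 3)
          + (f 0 - f 2) * (g 2 - g 3) + (f 0 - f 1 - f 2 + f 3) * g 3 := by
      simp only [Pi.mul_apply]; ring
    have hprod : ∀ {a b : A}, t ∣ a → t ∣ b → t ^ 2 ∣ a * b := fun ha hb =>
      sq t ▸ mul_dvd_mul ha hb
    rw [h]
    exact dvd_add (dvd_add (dvd_add (hg.2.mul_left _) (hprod (hf.1 0 1) (hg.1 1 3)))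
      (hprod (hf.1 0 2) (hg.1 2 3))) (hf.2.mul_right _)

theorem algebraMap_mem_gkmSet (t c : A) : algebraMap A (Fin 4 → A) c ∈ gkmSet t :=
  ⟨fun i j => by simp, by simp⟩

def gkmSubalgebra (t : A) : Subalgebra A (Fin 4 → A) where
  carrier := gkmSet t
  mul_mem' := gkmSet_mul_mem
  add_mem' := gkmSet_add_mem
  algebraMap_mem' := algebraMap_mem_gkmSet t

theorem mem_gkmSet_iff {t : A} {f : Fin 4 → A} :
    f ∈ gkmSet t ↔
      ∃ a b c d : A, ![a, a + t * b, a + t * c, a + t * b + t * c + t ^ 2 * d] = f := by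
  rw [gkmSet, Set.mem_ofPred_eq, forall_dvd_sub_iff 0]
  constructor
  · rintro ⟨hdvd, d, hd⟩
    obtain ⟨b, hb⟩ := hdvd 1
    obtain ⟨c, hc⟩ := hdvd 2
    refine ⟨f 0, b, c, d, funext fun i => ?_⟩
    fin_cases i
    · rfl
    · show f 0 + t * b = f 1
      linear_combination -hb
    · show f 0 + t * c = f 2
      linear_combination -hc
    · show f 0 + t * b + t * c + t ^ 2 * d = f 3
      linear_combination -hb - hc - hd
  · rintro ⟨a, b, c, d, rfl⟩
    refine ⟨fun i => ?_, d, ?_⟩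
    · fin_cases i
      · exact ⟨0, by simp⟩
      · exact ⟨b, show a + t * b - a = _ by ring⟩
      · exact ⟨c, show a + t * c - a = _ by ring⟩
      · exact ⟨b + c + t * d, show a + t * b + t * c + t ^ 2 * d - a = _ by ring⟩
    · show a - (a + t * b) - (a + t * c) + (a + t * b + t * c + t ^ 2 * d) = _
      ring

def gkmBasisVec (t : A) : Fin 4 → Fin 4 → A :=
  ![![1, 1, 1, 1], ![0, t, 0, t], ![0, 0, t, t], ![0, 0, 0, t ^ 2]]

theorem sum_smul_gkmBasisVec (t : A) (g : Fin 4 → A) :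
    ∑ i, g i • gkmBasisVec t i =
      ![g 0, g 0 + t * g 1, g 0 + t * g 2, g 0 + t * g 1 + t * g 2 + t ^ 2 * g 3] := by
  ext j
  fin_cases j <;>
    simp only [gkmBasisVec, Finset.sum_apply, Pi.smul_apply, smul_eq_mul, Fin.sum_univ_four,
      Fin.zero_eta, Fin.mk_one, Fin.reduceFinMk, Fin.isValue, Matrix.cons_val,
      Matrix.cons_val_zero, Matrix.cons_val_one] <;>
    ring

theorem linearIndependent_gkmBasisVec {t : A} (ht : t ∈ nonZeroDivisors A) :
    LinearIndependent A (gkmBasisVec t) := by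
  rw [Fintype.linearIndependent_iff]
  intro g hg
  rw [sum_smul_gkmBasisVec] at hg
  have ht2 : t ^ 2 ∈ nonZeroDivisors A := pow_mem ht 2
  have h0 : g 0 = 0 := by simpa using congrFun hg 0
  have h1 : g 1 = 0 := by
    simpa [h0, mul_left_mem_nonZeroDivisors_eq_zero_iff ht] using congrFun hg 1
  have h2 : g 2 = 0 := by
    simpa [h0, mul_left_mem_nonZeroDivisors_eq_zero_iff ht] using congrFun hg 2
  have h3 : g 3 = 0 := by
    simpa [h0, h1, h2, mul_left_mem_nonZeroDivisors_eq_zero_iff ht2] using congrFun hg 3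
  intro i
  fin_cases i <;> assumption

theorem span_gkmBasisVec (t : A) :
    Submodule.span A (Set.range (gkmBasisVec t)) =
      Subalgebra.toSubmodule (gkmSubalgebra t) := by
  ext f
  rw [Submodule.mem_span_range_iff_exists_fun, Subalgebra.mem_toSubmodule]
  change _ ↔ f ∈ gkmSet t
  simp only [sum_smul_gkmBasisVec, mem_gkmSet_iff]
  exact ⟨fun ⟨g, hg⟩ => ⟨g 0, g 1, g 2, g 3, hg⟩,
    fun ⟨a, b, c, d, h⟩ => ⟨![a, b, c, d], h⟩⟩

noncomputable def gkmBasis {t : A} (ht : t ∈ nonZeroDivisors A) :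
    Module.Basis (Fin 4) A (Subalgebra.toSubmodule (gkmSubalgebra t)) :=
  (Module.Basis.span (linearIndependent_gkmBasisVec ht)).map
    (LinearEquiv.ofEq _ _ (span_gkmBasisVec t))

/-- `R = {(f₁,f₂,f₃,f₄) ∈ ℂ[x]⁴ : x ∣ fᵢ - fⱼ for all i,j, x² ∣ f₁ - f₂ - f₃ + f₄}`
is a subring of `ℂ[x]⁴` and a free `ℂ[x]`-module of rank 4 (for the diagonal
`ℂ[x]`-action). -/
theorem stmt_9 :
    ∃ (R : Subring (Fin 4 → Polynomial ℂ))
      (N : Submodule (Polynomial ℂ) (Fin 4 → Polynomial ℂ)),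
      (R : Set (Fin 4 → Polynomial ℂ)) =
        {f : Fin 4 → Polynomial ℂ |
          (∀ i j : Fin 4, X ∣ f i - f j) ∧
          X ^ 2 ∣ f 0 - f 1 - f 2 + f 3} ∧
      (N : Set (Fin 4 → Polynomial ℂ)) = (R : Set (Fin 4 → Polynomial ℂ)) ∧
      Nonempty (Module.Basis (Fin 4) (Polynomial ℂ) N) :=
  ⟨(gkmSubalgebra X).toSubring, Subalgebra.toSubmodule (gkmSubalgebra X), rfl, rfl,
    ⟨gkmBasis (mem_nonZeroDivisors_of_ne_zero X_ne_zero)⟩⟩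
end

section
/- Define the ℂ[x]-subalgebra R of ℂ[x]³ generated by the diagonal together with u = (0, x, 2x) and v = (0, 0, 2x²). Then R equals exactly {(f₁,f₂,f₃) ∈ ℂ[x]³ : x | fᵢ - fⱼ for all i,j and x² | f₁ - 2f₂ + f₃}. -/
open Polynomial

/-- The `ℂ[x]`-subalgebra of the product `ℂ[x]³` (into which `ℂ[x]` embeds
diagonally as the `algebraMap`) generated by `u = (0, x, 2x)` and
`v = (0, 0, 2x²)` is exactly
`{(f₁,f₂,f₃) ∈ ℂ[x]³ : x ∣ fᵢ - fⱼ for all i,j and x² ∣ f₁ - 2f₂ + f₃}`. -/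
theorem stmt_19 (u v : Fin 3 → Polynomial ℂ)
    (hu : u = ![0, X, 2 * X]) (hv : v = ![0, 0, 2 * X ^ 2]) :
    (Algebra.adjoin (Polynomial ℂ) {u, v} :
        Subalgebra (Polynomial ℂ) (Fin 3 → Polynomial ℂ)).carrier =
      {f : Fin 3 → Polynomial ℂ |
        (∀ i j : Fin 3, X ∣ f i - f j) ∧ X ^ 2 ∣ f 0 - 2 * f 1 + f 2} := by
  ext f
  constructor
  · intro hf
    refine Algebra.adjoin_induction ?_ ?_ ?_ ?_ hf
    · intro x hx
      rw [Set.mem_insert_iff, Set.mem_singleton_iff] at hx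
      rcases hx with rfl | rfl
      · subst hu
        refine ⟨fun i j => dvd_sub ?_ ?_, ?_⟩
        · fin_cases i <;> simp
        · fin_cases j <;> simp
        · have h : (![0, X, 2 * X] : Fin 3 → Polynomial ℂ) 0
              - 2 * (![0, X, 2 * X] : Fin 3 → Polynomial ℂ) 1
              + (![0, X, 2 * X] : Fin 3 → Polynomial ℂ) 2 = 0 := by
            simp
          rw [h]
          exact dvd_zero _
      · subst hv
        refine ⟨fun i j => dvd_sub ?_ ?_, ?_⟩
        · fin_cases i <;> simp <;> exact ⟨2 * X, by ring⟩
        · fin_cases j <;> simp <;> exact ⟨2 * X, by ring⟩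
        · refine ⟨2, ?_⟩
          show (0 : Polynomial ℂ) - 2 * 0 + 2 * X ^ 2 = X ^ 2 * 2
          ring
    · intro r
      refine ⟨fun i j => ?_, ?_⟩
      · show X ∣ r - r
        simp
      · show X ^ 2 ∣ r - 2 * r + r
        have h : r - 2 * r + r = 0 := by ring
        rw [h]
        exact dvd_zero _
    · rintro x y _ _ ⟨hx1, hx2⟩ ⟨hy1, hy2⟩
      refine ⟨fun i j => ?_, ?_⟩
      · have h : x i + y i - (x j + y j) = (x i - x j) + (y i - y j) := by ring
        simpa [h] using dvd_add (hx1 i j) (hy1 i j)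
      · have h : (x + y) 0 - 2 * (x + y) 1 + (x + y) 2
            = (x 0 - 2 * x 1 + x 2) + (y 0 - 2 * y 1 + y 2) := by
          simp only [Pi.add_apply]; ring
        rw [h]; exact dvd_add hx2 hy2
    · rintro x y _ _ ⟨hx1, hx2⟩ ⟨hy1, hy2⟩
      refine ⟨fun i j => ?_, ?_⟩
      · obtain ⟨p, hp⟩ := hx1 i j
        obtain ⟨q, hq⟩ := hy1 i j
        exact ⟨x i * q + p * y j, by
          simp only [Pi.mul_apply]
          linear_combination x i * hq + y j * hp⟩
      · obtain ⟨e1, he1⟩ := hx1 1 0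
        obtain ⟨e2, he2⟩ := hx1 2 0
        obtain ⟨d1, hd1⟩ := hy1 1 0
        obtain ⟨d2, hd2⟩ := hy1 2 0
        obtain ⟨cf, hcf⟩ := hx2
        obtain ⟨cg, hcg⟩ := hy2
        refine ⟨x 0 * cg + y 0 * cf - 2 * e1 * d1 + e2 * d2, ?_⟩
        simp only [Pi.mul_apply]
        linear_combination x 0 * hcg + y 0 * hcf - 2 * ((y 1 - y 0) * he1 + X * e1 * hd1)
          + (y 2 - y 0) * he2 + X * e2 * hd2
  · rintro ⟨h1, h2⟩
    obtain ⟨a, ha⟩ := h1 1 0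
    obtain ⟨c, hc⟩ := h2
    subst hu; subst hv
    have h2inv : (2 : Polynomial ℂ) * C (2⁻¹ : ℂ) = 1 := by
      have h : C ((2 : ℂ) * 2⁻¹) = C (2 : ℂ) * C (2⁻¹ : ℂ) := C_mul
      rw [show (2 : ℂ) * 2⁻¹ = 1 by norm_num, C_1, map_ofNat] at h
      linear_combination -h
    have hf : f = algebraMap (Polynomial ℂ) (Fin 3 → Polynomial ℂ) (f 0)
        + a • (![0, X, 2 * X] : Fin 3 → Polynomial ℂ)
        + (C (2⁻¹ : ℂ) * c) • (![0, 0, 2 * X ^ 2] : Fin 3 → Polynomial ℂ) := by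
      have e0 : f 0 = f 0 + a * 0 + (C (2⁻¹ : ℂ) * c) * 0 := by ring
      have e1 : f 1 = f 0 + a * X + (C (2⁻¹ : ℂ) * c) * 0 := by linear_combination ha
      have e2 : f 2 = f 0 + a * (2 * X) + (C (2⁻¹ : ℂ) * c) * (2 * X ^ 2) := by
        linear_combination 2 * ha + hc - X ^ 2 * c * h2inv
      funext i
      fin_cases i
      · exact e0
      · exact e1
      · exact e2
    rw [hf]
    exact add_mem (add_mem (Subalgebra.algebraMap_mem _ _)
      (Subalgebra.smul_mem _ (Algebra.subset_adjoin (by simp)) _))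
      (Subalgebra.smul_mem _ (Algebra.subset_adjoin (by simp)) _)
end
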